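/- Strong joint concavity of F_min: for density matrices ρ_y, σ_y and nonnegative weights λ_y, μ_y with Σλ_y = Σμ_y = 1, F_min(Σ_y λ_y ρ_y, Σ_y μ_y σ_y) ≥ Σ_y √(λ_y μ_y) F_min(ρ_y, σ_y). -/

import Mathlib

open Matrix BigOperators
open scoped ComplexOrder Classical

noncomputable def msqrt {n : Type*} [Fintype n] [DecidableEq n]
    (A : Matrix n n ℂ) : Matrix n n ℂ :=
  if h : A.PosSemidef then
    (h.1.eigenvectorUnitary : Matrix n n ℂ) *
      diagonal (((↑) : ℝ → ℂ) ∘ Real.sqrt ∘ h.1.eigenvalues) *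
      (star h.1.eigenvectorUnitary : Matrix n n ℂ)
  else 0

noncomputable def gm {n : Type*} [Fintype n] [DecidableEq n]
    (A B : Matrix n n ℂ) : Matrix n n ℂ :=
  msqrt A * msqrt ((msqrt A)⁻¹ * B * (msqrt A)⁻¹) * msqrt A

def IsDensity {n : Type*} [Fintype n] (ρ : Matrix n n ℂ) : Prop :=
  ρ.PosSemidef ∧ ρ.trace = 1

structure IsReverseTest {d m : ℕ} (ρ σ : Matrix (Fin d) (Fin d) ℂ)
    (R : Fin m → Matrix (Fin d) (Fin d) ℂ) (p q : Fin m → ℝ) : Prop where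
  states : ∀ x, IsDensity (R x)
  p_nonneg : ∀ x, 0 ≤ p x
  q_nonneg : ∀ x, 0 ≤ q x
  p_sum : ∑ x, p x = 1
  q_sum : ∑ x, q x = 1
  rho_eq : ∑ x, (p x : ℂ) • R x = ρ
  sigma_eq : ∑ x, (q x : ℂ) • R x = σ

noncomputable def Fmin {d : ℕ} (ρ σ : Matrix (Fin d) (Fin d) ℂ) : ℝ :=
  sSup {r : ℝ | ∃ (m : ℕ) (R : Fin m → Matrix (Fin d) (Fin d) ℂ) (p q : Fin m → ℝ),
    IsReverseTest ρ σ R p q ∧ r = ∑ x, Real.sqrt (p x * q x)}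

noncomputable def Dmax {d : ℕ} (ρ σ : Matrix (Fin d) (Fin d) ℂ) : ℝ :=
  sInf {r : ℝ | ∃ (m : ℕ) (R : Fin m → Matrix (Fin d) (Fin d) ℂ) (p q : Fin m → ℝ),
    IsReverseTest ρ σ R p q ∧ r = (∑ x, |p x - q x|) / 2}

noncomputable def choiMatrix {d e : ℕ}
    (Λ : Matrix (Fin d) (Fin d) ℂ →ₗ[ℂ] Matrix (Fin e) (Fin e) ℂ) :
    Matrix (Fin d × Fin e) (Fin d × Fin e) ℂ :=
  Matrix.of fun pr qr => Λ (Matrix.single pr.1 qr.1 1) pr.2 qr.2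

def IsCPTP {d e : ℕ}
    (Λ : Matrix (Fin d) (Fin d) ℂ →ₗ[ℂ] Matrix (Fin e) (Fin e) ℂ) : Prop :=
  (choiMatrix Λ).PosSemidef ∧ ∀ A, (Λ A).trace = A.trace

noncomputable def mcfc {n : Type*} [Fintype n] [DecidableEq n]
    (f : ℝ → ℝ) (A : Matrix n n ℂ) : Matrix n n ℂ :=
  if h : A.IsHermitian then h.cfc f else 0

def IsOperatorMonotoneOnNonneg (f : ℝ → ℝ) : Prop :=
  ∀ (d : ℕ) (A B : Matrix (Fin d) (Fin d) ℂ), A.PosSemidef → B.PosSemidef →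
    (B - A).PosSemidef → (mcfc f B - mcfc f A).PosSemidef

noncomputable def traceNorm {n : Type*} [Fintype n] [DecidableEq n]
    (A : Matrix n n ℂ) : ℝ :=
  ((msqrt (Aᴴ * A)).trace).re

/-!
The proof rests on the block-matrix characterisation of the geometric mean: for `A > 0`,
`A # B` is the largest `X ≥ 0` with `[[A, X], [X, B]] ≥ 0`. Writing `A # B = R C R` with
`R = √A` and `C = √(R⁻¹ B R⁻¹)`, the block matrix with `X = A # B` is `Kᴴ K` for
`K = [[R, C R], [0, 0]]`; conversely, the Schur complement gives `X A⁻¹ X ≤ B`, i.e.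
`(R⁻¹ X R⁻¹)² ≤ R⁻¹ B R⁻¹`, and operator monotonicity of the square root yields `X ≤ A # B`.

Scaling the blocks of `ρ_y, ρ_y # σ_y, σ_y` by `λ_y, √(λ_y μ_y), μ_y` keeps them positive, so
their sum is a positive block matrix with diagonal `Σ λ_y ρ_y, Σ μ_y σ_y` and off-diagonal
`X = Σ √(λ_y μ_y) ρ_y # σ_y`. Hence `X ≤ (Σ λ_y ρ_y) # (Σ μ_y σ_y)`; take traces.
-/

-- The C⋆-algebra structure from the operator norm makes `CFC.sqrt` operator monotone.
open scoped MatrixOrder Matrix.Norms.L2Operator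

namespace Matrix

variable {n : Type*}

lemma fromBlocks_sum {ι α l m o p : Type*} [AddCommMonoid α] (s : Finset ι)
    (A : ι → Matrix l o α) (B : ι → Matrix l p α) (C : ι → Matrix m o α)
    (D : ι → Matrix m p α) :
    ∑ i ∈ s, fromBlocks (A i) (B i) (C i) (D i) =
      fromBlocks (∑ i ∈ s, A i) (∑ i ∈ s, B i) (∑ i ∈ s, C i) (∑ i ∈ s, D i) := by
  ext (i | i) (j | j) <;> simp [Matrix.sum_apply]

lemma PosSemidef.fromBlocks_smul_smul {m : Type*} [Fintype n] [DecidableEq n] [Fintype m]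
    [DecidableEq m] {A : Matrix n n ℂ} {B : Matrix n m ℂ} {C : Matrix m n ℂ} {D : Matrix m m ℂ}
    (h : (fromBlocks A B C D).PosSemidef) {s t : ℝ} (hs : 0 ≤ s) (ht : 0 ≤ t) :
    (fromBlocks ((s : ℂ) • A) ((√(s * t) : ℂ) • B) ((√(s * t) : ℂ) • C)
      ((t : ℂ) • D)).PosSemidef := by
  have hst : (√(s * t) : ℂ) = √s * √t := by rw [Real.sqrt_mul hs]; push_cast; ring
  have hss : (s : ℂ) = √s * √s := by rw [← Complex.ofReal_mul, Real.mul_self_sqrt hs]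
  have htt : (t : ℂ) = √t * √t := by rw [← Complex.ofReal_mul, Real.mul_self_sqrt ht]
  have key := h.conjTranspose_mul_mul_same
    (fromBlocks ((√s : ℂ) • (1 : Matrix n n ℂ)) 0 0 ((√t : ℂ) • (1 : Matrix m m ℂ)))
  simp only [fromBlocks_conjTranspose, fromBlocks_multiply, conjTranspose_smul,
    conjTranspose_one, conjTranspose_zero, Matrix.zero_mul, Matrix.mul_zero, add_zero, zero_add,
    Matrix.smul_mul, Matrix.mul_smul, Matrix.one_mul, Matrix.mul_one, smul_smul,
    Complex.star_def, Complex.conj_ofReal] at key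
  rw [mul_comm (√t : ℂ) (√s : ℂ)] at key
  rwa [hst, hss, htt]

lemma posDef_sum_smul {ι : Type*} [Fintype ι] {τ : ι → Matrix n n ℂ} (hτ : ∀ i, (τ i).PosDef)
    {w : ι → ℝ} (hw : ∀ i, 0 ≤ w i) {i₀ : ι} (hi₀ : 0 < w i₀) :
    (∑ i, (w i : ℂ) • τ i).PosDef := by
  rw [← Finset.add_sum_erase _ _ (Finset.mem_univ i₀)]
  exact ((hτ i₀).smul (by exact_mod_cast hi₀)).add_posSemidef
    (posSemidef_sum _ fun i _ => (hτ i).posSemidef.smul (by exact_mod_cast hw i))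

lemma re_trace_le_of_le [Fintype n] {X Y : Matrix n n ℂ} (h : X ≤ Y) :
    X.trace.re ≤ Y.trace.re := by
  have := (Matrix.le_iff.mp h).trace_nonneg
  rw [trace_sub, sub_nonneg] at this
  exact (Complex.le_def.mp this).1

variable [Fintype n] [DecidableEq n]

lemma msqrt_eq_cfcSqrt {A : Matrix n n ℂ} (hA : A.PosSemidef) : msqrt A = CFC.sqrt A := by
  rw [CFC.sqrt_eq_cfc, cfc_nnreal_eq_real _ A, hA.1.cfc_eq]
  simp only [msqrt, dif_pos hA, IsHermitian.cfc, Unitary.conjStarAlgAut_apply]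
  congr 3
  funext i
  simp [max_eq_left (hA.eigenvalues_nonneg i)]

lemma isSelfAdjoint_inv_cfcSqrt (A : Matrix n n ℂ) : IsSelfAdjoint (CFC.sqrt A)⁻¹ :=
  (IsSelfAdjoint.of_nonneg (CFC.sqrt_nonneg A)).isHermitian.inv.isSelfAdjoint

lemma isUnit_cfcSqrt {A : Matrix n n ℂ} (hA : A.PosDef) : IsUnit (CFC.sqrt A) := by
  have hu : IsUnit (CFC.sqrt A * CFC.sqrt A) := by
    rw [CFC.sqrt_mul_sqrt_self A hA.posSemidef.nonneg]; exact hA.isUnit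
  exact isUnit_of_mul_isUnit_left hu

lemma gm_eq_cfcSqrt {A B : Matrix n n ℂ} (hA : 0 ≤ A) (hB : 0 ≤ B) :
    gm A B = CFC.sqrt A * CFC.sqrt ((CFC.sqrt A)⁻¹ * B * (CFC.sqrt A)⁻¹) * CFC.sqrt A := by
  have hM : 0 ≤ (CFC.sqrt A)⁻¹ * B * (CFC.sqrt A)⁻¹ :=
    (isSelfAdjoint_inv_cfcSqrt A).conjugate_nonneg hB
  rw [gm, msqrt_eq_cfcSqrt (nonneg_iff_posSemidef.mp hA),
    msqrt_eq_cfcSqrt (nonneg_iff_posSemidef.mp hM)]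

lemma gm_nonneg {A B : Matrix n n ℂ} (hA : 0 ≤ A) (hB : 0 ≤ B) : 0 ≤ gm A B := by
  rw [gm_eq_cfcSqrt hA hB]
  exact conjugate_nonneg_of_nonneg (CFC.sqrt_nonneg _) (CFC.sqrt_nonneg A)

lemma posSemidef_fromBlocks_gm {A B : Matrix n n ℂ} (hA : A.PosDef) (hB : 0 ≤ B) :
    (fromBlocks A (gm A B) (gm A B) B).PosSemidef := by
  set R := CFC.sqrt A
  set C := CFC.sqrt (R⁻¹ * B * R⁻¹)
  have hR : Rᴴ = R := (IsSelfAdjoint.of_nonneg (CFC.sqrt_nonneg A)).isHermitian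
  have hC : Cᴴ = C := (IsSelfAdjoint.of_nonneg (CFC.sqrt_nonneg _)).isHermitian
  have hRR : R * R = A := CFC.sqrt_mul_sqrt_self A hA.posSemidef.nonneg
  have hCC : C * C = R⁻¹ * B * R⁻¹ :=
    CFC.sqrt_mul_sqrt_self _ ((isSelfAdjoint_inv_cfcSqrt A).conjugate_nonneg hB)
  have hRu : IsUnit R.det := (isUnit_iff_isUnit_det R).mp (isUnit_cfcSqrt hA)
  have hCRRC : R * C * (C * R) = B := by
    rw [show R * C * (C * R) = R * (C * C) * R by simp only [Matrix.mul_assoc], hCC,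
      show R * (R⁻¹ * B * R⁻¹) * R = (R * R⁻¹) * B * (R⁻¹ * R) by simp only [Matrix.mul_assoc],
      mul_nonsing_inv R hRu, nonsing_inv_mul R hRu, Matrix.one_mul, Matrix.mul_one]
  have hK : (fromBlocks R (C * R) 0 0)ᴴ * fromBlocks R (C * R) 0 0 =
      fromBlocks A (gm A B) (gm A B) B := by
    simp only [fromBlocks_conjTranspose, fromBlocks_multiply, conjTranspose_mul, hR, hC,
      conjTranspose_zero, Matrix.mul_zero, add_zero, hRR, hCRRC,
      gm_eq_cfcSqrt hA.posSemidef.nonneg hB]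
    simp only [R, C, Matrix.mul_assoc]
  rw [← hK]
  exact posSemidef_conjTranspose_mul_self _

lemma le_gm_of_posSemidef_fromBlocks {A B X : Matrix n n ℂ} (hA : A.PosDef) (hX : 0 ≤ X)
    (h : (fromBlocks A X X B).PosSemidef) : X ≤ gm A B := by
  set R := CFC.sqrt A
  have hRinv : IsSelfAdjoint R⁻¹ := isSelfAdjoint_inv_cfcSqrt A
  have hRu : IsUnit R.det := (isUnit_iff_isUnit_det R).mp (isUnit_cfcSqrt hA)
  have hAinv : A⁻¹ = R⁻¹ * R⁻¹ := by
    rw [← CFC.sqrt_mul_sqrt_self A hA.posSemidef.nonneg, Matrix.mul_inv_rev]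
  let := hA.isUnit.invertible
  have hschur : X * A⁻¹ * X ≤ B := by
    have hX' : Xᴴ = X := (IsSelfAdjoint.of_nonneg hX).isHermitian
    have hS := (PosDef.fromBlocks₁₁ X B hA).mp (by rwa [hX'])
    rwa [hX', ← Matrix.le_iff] at hS
  set Y := R⁻¹ * X * R⁻¹
  have hY : 0 ≤ Y := hRinv.conjugate_nonneg hX
  have hYY : Y ^ 2 ≤ R⁻¹ * B * R⁻¹ := by
    calc Y ^ 2 = R⁻¹ * (X * A⁻¹ * X) * R⁻¹ := by
          simp only [Y, sq, hAinv, Matrix.mul_assoc]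
      _ ≤ R⁻¹ * B * R⁻¹ := hRinv.conjugate_le_conjugate hschur
  have hRYR : R * Y * R = X := by
    simp only [Y, ← Matrix.mul_assoc, mul_nonsing_inv R hRu, Matrix.one_mul]
    rw [Matrix.mul_assoc, nonsing_inv_mul R hRu, Matrix.mul_one]
  calc X = R * CFC.sqrt (Y ^ 2) * R := by rw [CFC.sqrt_sq Y hY, hRYR]
    _ ≤ R * CFC.sqrt (R⁻¹ * B * R⁻¹) * R :=
        conjugate_le_conjugate_of_nonneg (CFC.sqrt_le_sqrt _ _ hYY) (CFC.sqrt_nonneg A)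
    _ = gm A B :=
        (gm_eq_cfcSqrt hA.posSemidef.nonneg (h.submatrix Sum.inr : B.PosSemidef).nonneg).symm

end Matrix

open Matrix in
theorem stmt8_general {d m : ℕ} (ρ σ : Fin m → Matrix (Fin d) (Fin d) ℂ)
    (hρ : ∀ y, (ρ y).PosDef) (hσ : ∀ y, (σ y).PosDef)
    (lam mu : Fin m → ℝ) (hlam : ∀ y, 0 ≤ lam y) (hmu : ∀ y, 0 ≤ mu y)
    (hlam1 : ∑ y, lam y = 1) :
    ∑ y, Real.sqrt (lam y * mu y) * ((gm (ρ y) (σ y)).trace).re ≤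
      ((gm (∑ y, (lam y : ℂ) • ρ y) (∑ y, (mu y : ℂ) • σ y)).trace).re := by
  obtain ⟨y₀, -, hy₀⟩ : ∃ y ∈ Finset.univ, (0 : ℝ) < lam y :=
    Finset.exists_lt_of_sum_lt (by simp [hlam1])
  set X := ∑ y, (√(lam y * mu y) : ℂ) • gm (ρ y) (σ y)
  have hX : 0 ≤ X := Finset.sum_nonneg fun y _ =>
    smul_nonneg (by exact_mod_cast Real.sqrt_nonneg _)
      (gm_nonneg (hρ y).posSemidef.nonneg (hσ y).posSemidef.nonneg)
  have hblock :
      (fromBlocks (∑ y, (lam y : ℂ) • ρ y) X X (∑ y, (mu y : ℂ) • σ y)).PosSemidef := by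
    rw [← fromBlocks_sum]
    exact posSemidef_sum _ fun y _ =>
      (posSemidef_fromBlocks_gm (hρ y) (hσ y).posSemidef.nonneg).fromBlocks_smul_smul
        (hlam y) (hmu y)
  have hle := le_gm_of_posSemidef_fromBlocks (posDef_sum_smul hρ hlam hy₀) hX hblock
  simpa [X, trace_sum, trace_smul] using re_trace_le_of_le hle

theorem stmt8 {d m : ℕ} (ρ σ : Fin m → Matrix (Fin d) (Fin d) ℂ)
    (hρ : ∀ y, (ρ y).PosDef) (hσ : ∀ y, (σ y).PosDef)
    (hρ1 : ∀ y, (ρ y).trace = 1) (hσ1 : ∀ y, (σ y).trace = 1)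
    (lam mu : Fin m → ℝ) (hlam : ∀ y, 0 ≤ lam y) (hmu : ∀ y, 0 ≤ mu y)
    (hlam1 : ∑ y, lam y = 1) (hmu1 : ∑ y, mu y = 1) :
    ∑ y, Real.sqrt (lam y * mu y) * ((gm (ρ y) (σ y)).trace).re ≤
      ((gm (∑ y, (lam y : ℂ) • ρ y) (∑ y, (mu y : ℂ) • σ y)).trace).re :=
  stmt8_general ρ σ hρ hσ lam mu hlam hmu hlam1
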